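/- arXiv:1812.06924 — 2 statements merged into one kernel-verified Lean document; each statement's English description precedes it below -/
import Mathlib

section
/- Let X_1, X_2, ... be i.i.d. real random variables with mean zero, finite moments of all orders, and set σ² = E[X_1²]. For every even integer k ≥ 2, the limit of n^{-k/2} · E[(X_1 + ... + X_n)^k] as n → ∞ exists and equals C_k σ^k, where C_k = k! / (2^{k/2} · (k/2)!). -/
/-!
Let `a n j = E[S_n^j]` and `μ m = E[X_1^m]`. Expanding `S_{n+1} = S_n + X_{n+1}` binomially and
using independence gives `a (n+1) j = ∑ i, C(j,i) a n i μ (j-i)`; since `μ 0 = 1` and `μ 1 = 0`,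
the increment `a (n+1) (j+2) - a n (j+2)` only involves moments of order `≤ j`. By strong
induction, `a n i / n^⌊i/2⌋` converges for every `i`, so the increment divided by `n^⌊j/2⌋`
converges, and summing it (Stolz–Cesàro together with `∑_{t<n} t^m ~ n^(m+1)/(m+1)`) shows that
`a n (j+2) / n^(⌊j/2⌋+1)` converges. For `j = 2p` only the term `i = 2p` survives in the limit,
so the limits `L_{2p}` satisfy `L_{2p+2} = (2p+1) σ² L_{2p}`, the recursion of Gaussian moments.
-/

open MeasureTheory ProbabilityTheory Filter Topology Asymptotics Finset
open scoped Nat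

theorem tendsto_sum_range_div_sum_range {a b : ℕ → ℝ} {ℓ : ℝ} (hb : 0 ≤ b)
    (hb' : ∀ᶠ n in atTop, b n ≠ 0)
    (hsum : Tendsto (fun n => ∑ i ∈ range n, b i) atTop atTop)
    (hab : Tendsto (fun n => a n / b n) atTop (𝓝 ℓ)) :
    Tendsto (fun n => (∑ i ∈ range n, a i) / ∑ i ∈ range n, b i) atTop (𝓝 ℓ) := by
  have hlittle : (fun n => a n - ℓ * b n) =o[atTop] b := by
    refine (isLittleO_iff_tendsto' (hb'.mono fun n hn h => absurd h hn)).2 ?_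
    refine (tendsto_sub_nhds_zero_iff.2 hab).congr' ?_
    filter_upwards [hb'] with n hn
    field_simp
  refine tendsto_sub_nhds_zero_iff.1 ((hlittle.sum_range hb hsum).tendsto_div_nhds_zero.congr' ?_)
  filter_upwards [hsum.eventually_gt_atTop 0] with n hn
  rw [sum_sub_distrib, ← mul_sum]
  field_simp

theorem Filter.Tendsto.div_pow_of_le {f : ℕ → ℝ} {p q : ℕ} {L : ℝ}
    (h : Tendsto (fun n => f n / (n : ℝ) ^ p) atTop (𝓝 L)) (hpq : p ≤ q) :
    Tendsto (fun n => f n / (n : ℝ) ^ q) atTop (𝓝 (if p = q then L else 0)) := by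
  have hpow : Tendsto (fun n : ℕ => ((n : ℝ) ^ (q - p))⁻¹) atTop
      (𝓝 (if p = q then 1 else 0)) := by
    split_ifs with hpq'
    · simp [hpq']
    · exact (tendsto_pow_atTop (by omega)).comp tendsto_natCast_atTop_atTop |>.inv_tendsto_atTop
  have := h.mul hpow
  rw [apply_ite (L * ·), mul_one, mul_zero] at this
  refine this.congr fun n => ?_
  rw [← div_eq_mul_inv, div_div, ← pow_add, Nat.add_sub_cancel' hpq]

theorem tendsto_pow_div_pow_of_le {p q : ℕ} (hpq : p ≤ q) :
    Tendsto (fun n : ℕ => (n : ℝ) ^ p / (n : ℝ) ^ q) atTop (𝓝 (if p = q then 1 else 0)) := by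
  refine Tendsto.div_pow_of_le (tendsto_const_nhds.congr' ?_) hpq
  filter_upwards [eventually_ne_atTop 0] with n hn
  simp [hn]

theorem tendsto_sum_range_pow_div_pow_succ (m : ℕ) :
    Tendsto (fun n : ℕ => (∑ i ∈ range n, (i : ℝ) ^ m) / (n : ℝ) ^ (m + 1)) atTop
      (𝓝 (1 / (m + 1))) := by
  set c : ℕ → ℝ := fun i => bernoulli i * (m + 1).choose i / (m + 1)
  have hfaulhaber (n : ℕ) :
      ∑ i ∈ range n, (i : ℝ) ^ m = ∑ i ∈ range (m + 1), c i * (n : ℝ) ^ (m + 1 - i) := by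
    have := congrArg (Rat.cast : ℚ → ℝ) (sum_range_pow n m)
    push_cast at this
    rw [this]
    exact sum_congr rfl fun i _ => by ring
  have hlim : ∑ i ∈ range (m + 1), c i * (if m + 1 - i = m + 1 then 1 else 0) = 1 / (m + 1) := by
    rw [sum_eq_single_of_mem 0 (by simp) fun i _ hi0 => by rw [if_neg (by omega), mul_zero]]
    simp [c]
  simp only [hfaulhaber, sum_div, mul_div_assoc, ← hlim]
  exact tendsto_finsetSum _ fun i _ =>
    (tendsto_pow_div_pow_of_le (Nat.sub_le (m + 1) i)).const_mul (c i)

theorem tendsto_sum_range_div_pow_succ {d : ℕ → ℝ} {m : ℕ} {c : ℝ}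
    (h : Tendsto (fun n => d n / (n : ℝ) ^ m) atTop (𝓝 c)) :
    Tendsto (fun n => (∑ i ∈ range n, d i) / (n : ℝ) ^ (m + 1)) atTop (𝓝 (c / (m + 1))) := by
  have hpow := tendsto_sum_range_pow_div_pow_succ m
  have hsum : Tendsto (fun n => ∑ i ∈ range n, (i : ℝ) ^ m) atTop atTop :=
    (hpow.pos_mul_atTop (by positivity) <| (tendsto_pow_atTop m.succ_ne_zero).comp
      tendsto_natCast_atTop_atTop).congr' <| by
      filter_upwards [eventually_ne_atTop 0] with n hn
      simp [hn]
  have hstolz := tendsto_sum_range_div_sum_range (fun i => by positivity)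
    ((eventually_ne_atTop 0).mono fun n hn => by simp [hn]) hsum h
  rw [← mul_one_div]
  refine (hstolz.mul hpow).congr' ?_
  filter_upwards [hsum.eventually_gt_atTop 0] with n hn
  field_simp

noncomputable def gaussianEvenMoment (p : ℕ) : ℝ := (2 * p)! / (2 ^ p * p !)

theorem gaussianEvenMoment_zero : gaussianEvenMoment 0 = 1 := by
  simp [gaussianEvenMoment]

theorem gaussianEvenMoment_succ (p : ℕ) :
    gaussianEvenMoment (p + 1) = (2 * p + 1) * gaussianEvenMoment p := by
  simp only [gaussianEvenMoment, Nat.mul_succ, Nat.factorial_succ, pow_succ]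
  push_cast
  field_simp
  ring

/-- `a n j` stands for `E[S_n^j]` and `μ m` for `E[X^m]`, where `S_n` is the sum of `n` independent
copies of a centred `X`. -/
structure IsCenteredWalkMoments (a : ℕ → ℕ → ℝ) (μ : ℕ → ℝ) : Prop where
  zero : ∀ j, a 0 j = 0 ^ j
  succ : ∀ n j, a (n + 1) j = ∑ i ∈ range (j + 1), a n i * μ (j - i) * j.choose i
  μ_zero : μ 0 = 1
  μ_one : μ 1 = 0

namespace IsCenteredWalkMoments

variable {a : ℕ → ℕ → ℝ} {μ : ℕ → ℝ}

theorem apply_zero (h : IsCenteredWalkMoments a μ) (n : ℕ) : a n 0 = 1 := by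
  induction n with
  | zero => simp [h.zero]
  | succ n ih => simp [h.succ, ih, h.μ_zero]

theorem apply_one (h : IsCenteredWalkMoments a μ) (n : ℕ) : a n 1 = 0 := by
  induction n with
  | zero => simp [h.zero]
  | succ n ih => simp [h.succ, sum_range_succ, ih, h.μ_zero, h.μ_one]

theorem succ_sub (h : IsCenteredWalkMoments a μ) (n j : ℕ) :
    a (n + 1) (j + 2) - a n (j + 2) =
      ∑ i ∈ range (j + 1), a n i * μ (j + 2 - i) * (j + 2).choose i := by
  rw [h.succ, sum_range_succ, sum_range_succ, Nat.sub_self, h.μ_zero,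
    show j + 2 - (j + 1) = 1 by omega, h.μ_one]
  simp

theorem tendsto_add_two (h : IsCenteredWalkMoments a μ) {ℓ : ℕ → ℝ} {j : ℕ}
    (hℓ : ∀ i ≤ j, Tendsto (fun n => a n i / (n : ℝ) ^ (i / 2)) atTop (𝓝 (ℓ i))) :
    Tendsto (fun n => a n (j + 2) / (n : ℝ) ^ ((j + 2) / 2)) atTop
      (𝓝 ((∑ i ∈ range (j + 1),
        (if i / 2 = j / 2 then ℓ i else 0) * μ (j + 2 - i) * (j + 2).choose i) /
          ((j / 2 : ℕ) + 1 : ℝ))) := by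
  have hincr : Tendsto (fun n => (a (n + 1) (j + 2) - a n (j + 2)) / (n : ℝ) ^ (j / 2)) atTop
      (𝓝 (∑ i ∈ range (j + 1),
        (if i / 2 = j / 2 then ℓ i else 0) * μ (j + 2 - i) * (j + 2).choose i)) := by
    simp only [h.succ_sub, sum_div]
    refine tendsto_finsetSum _ fun i hi => ?_
    have hij : i ≤ j := Nat.lt_succ_iff.1 (mem_range.1 hi)
    refine ((((hℓ i hij).div_pow_of_le (Nat.div_le_div_right hij)).mul_const
      (μ (j + 2 - i))).mul_const ((j + 2).choose i : ℝ)).congr fun n => ?_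
    ring
  have htelescope (n : ℕ) : ∑ t ∈ range n, (a (t + 1) (j + 2) - a t (j + 2)) = a n (j + 2) := by
    rw [sum_range_sub (fun t => a t (j + 2)), h.zero, zero_pow (by omega), sub_zero]
  rw [show (j + 2) / 2 = j / 2 + 1 by omega]
  simpa only [htelescope] using tendsto_sum_range_div_pow_succ hincr

theorem exists_tendsto (h : IsCenteredWalkMoments a μ) (j : ℕ) :
    ∃ L, Tendsto (fun n => a n j / (n : ℝ) ^ (j / 2)) atTop (𝓝 L) := by
  induction j using Nat.strong_induction_on with
  | _ j ih =>
  match j with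
  | 0 => exact ⟨1, by simp [h.apply_zero]⟩
  | 1 => exact ⟨0, by simp [h.apply_one]⟩
  | j + 2 => exact ⟨_, h.tendsto_add_two
      (ℓ := fun i => limUnder atTop fun n => a n i / (n : ℝ) ^ (i / 2))
      fun i hi => tendsto_nhds_limUnder (ih i (by omega))⟩

theorem tendsto_two_mul (h : IsCenteredWalkMoments a μ) (p : ℕ) :
    Tendsto (fun n => a n (2 * p) / (n : ℝ) ^ p) atTop (𝓝 (gaussianEvenMoment p * μ 2 ^ p)) := by
  induction p with
  | zero => simp [h.apply_zero, gaussianEvenMoment_zero]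
  | succ p ih =>
    set ℓ : ℕ → ℝ := fun i => limUnder atTop fun n => a n i / (n : ℝ) ^ (i / 2)
    have hℓ (i : ℕ) : Tendsto (fun n => a n i / (n : ℝ) ^ (i / 2)) atTop (𝓝 (ℓ i)) :=
      tendsto_nhds_limUnder (h.exists_tendsto i)
    have hℓp : ℓ (2 * p) = gaussianEvenMoment p * μ 2 ^ p :=
      tendsto_nhds_unique (hℓ (2 * p)) (by simpa using ih)
    have hchoose : ((2 * p + 2).choose (2 * p) : ℝ) = (p + 1) * (2 * p + 1) := by
      rw [Nat.choose_symm_add, Nat.cast_choose_two]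
      push_cast
      ring
    have := h.tendsto_add_two (j := 2 * p) fun i _ => hℓ i
    rw [sum_eq_single_of_mem (2 * p) (self_mem_range_succ _) fun i hi hip => by
      rw [if_neg (by have := mem_range.1 hi; omega), zero_mul, zero_mul]] at this
    rw [if_pos rfl, hℓp, hchoose, Nat.add_sub_cancel_left, Nat.mul_div_cancel_left p two_pos,
      show (2 * p + 2) / 2 = p + 1 by omega] at this
    rw [mul_add_one, gaussianEvenMoment_succ]
    convert this using 2
    field_simp
    ring

end IsCenteredWalkMoments

section Independence

variable {Ω : Type*} {mΩ : MeasurableSpace Ω} {P : Measure Ω}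

theorem ProbabilityTheory.IndepFun.pow {Y Z : Ω → ℝ} (hYZ : IndepFun Y Z P) (i l : ℕ) :
    IndepFun (fun ω => Y ω ^ i) (fun ω => Z ω ^ l) P :=
  hYZ.comp (measurable_id.pow_const i) (measurable_id.pow_const l)

theorem ProbabilityTheory.IndepFun.integrable_add_pow {Y Z : Ω → ℝ} (hYZ : IndepFun Y Z P)
    (hY : ∀ i : ℕ, Integrable (fun ω => Y ω ^ i) P)
    (hZ : ∀ i : ℕ, Integrable (fun ω => Z ω ^ i) P) (j : ℕ) :
    Integrable (fun ω => (Y ω + Z ω) ^ j) P := by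
  simp only [add_pow]
  refine integrable_finsetSum _ fun i _ => ?_
  exact ((hYZ.pow i (j - i)).integrable_mul (hY i) (hZ (j - i))).mul_const _

theorem ProbabilityTheory.IndepFun.integral_add_pow {Y Z : Ω → ℝ} (hYZ : IndepFun Y Z P)
    (hY : ∀ i : ℕ, Integrable (fun ω => Y ω ^ i) P)
    (hZ : ∀ i : ℕ, Integrable (fun ω => Z ω ^ i) P) (j : ℕ) :
    ∫ ω, (Y ω + Z ω) ^ j ∂P =
      ∑ i ∈ range (j + 1), (∫ ω, Y ω ^ i ∂P) * (∫ ω, Z ω ^ (j - i) ∂P) * j.choose i := by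
  simp only [add_pow]
  rw [integral_finsetSum _ fun i _ => ?_]
  · refine sum_congr rfl fun i _ => ?_
    rw [integral_mul_const, (hYZ.pow i (j - i)).integral_fun_mul_eq_mul_integral
      (hY i).aestronglyMeasurable (hZ (j - i)).aestronglyMeasurable]
  · exact ((hYZ.pow i (j - i)).integrable_mul (hY i) (hZ (j - i))).mul_const _

variable {X : ℕ → Ω → ℝ}

theorem ProbabilityTheory.iIndepFun.indepFun_sum_range (hmeas : ∀ i, Measurable (X i))
    (hindep : iIndepFun X P) (n : ℕ) : IndepFun (fun ω => ∑ i ∈ range n, X i ω) (X n) P := by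
  simpa only [sum_fn] using hindep.indepFun_finsetSum_of_notMem hmeas notMem_range_self

theorem ProbabilityTheory.iIndepFun.integrable_sum_range_pow (hmeas : ∀ i, Measurable (X i))
    (hindep : iIndepFun X P) (hX : ∀ i m : ℕ, Integrable (fun ω => X i ω ^ m) P) (n : ℕ) :
    ∀ m : ℕ, Integrable (fun ω => (∑ i ∈ range n, X i ω) ^ m) P := by
  have := hindep.isProbabilityMeasure
  induction n with
  | zero => simp
  | succ n ih =>
    simpa only [sum_range_succ] using (hindep.indepFun_sum_range hmeas n).integrable_add_pow ih (hX n)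

theorem ProbabilityTheory.iIndepFun.integral_sum_range_succ_pow (hmeas : ∀ i, Measurable (X i))
    (hindep : iIndepFun X P) (hX : ∀ i m : ℕ, Integrable (fun ω => X i ω ^ m) P) (n j : ℕ) :
    ∫ ω, (∑ i ∈ range (n + 1), X i ω) ^ j ∂P = ∑ i ∈ range (j + 1),
      (∫ ω, (∑ i ∈ range n, X i ω) ^ i ∂P) * (∫ ω, X n ω ^ (j - i) ∂P) * j.choose i := by
  simp only [sum_range_succ _ n]
  exact (hindep.indepFun_sum_range hmeas n).integral_add_pow
    (hindep.integrable_sum_range_pow hmeas hX n) (hX n) j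

theorem ProbabilityTheory.iIndepFun.isCenteredWalkMoments (hmeas : ∀ i, Measurable (X i))
    (hindep : iIndepFun X P) (hident : ∀ i, IdentDistrib (X i) (X 0) P P)
    (hX : ∀ i m : ℕ, Integrable (fun ω => X i ω ^ m) P) (hmean : ∫ ω, X 0 ω ∂P = 0) :
    IsCenteredWalkMoments (fun n j => ∫ ω, (∑ i ∈ range n, X i ω) ^ j ∂P)
      (fun m => ∫ ω, X 0 ω ^ m ∂P) := by
  have := hindep.isProbabilityMeasure
  refine ⟨fun j => by simp, fun n j => ?_, by simp, by simpa using hmean⟩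
  have hmoment (m : ℕ) : ∫ ω, X n ω ^ m ∂P = ∫ ω, X 0 ω ^ m ∂P :=
    ((hident n).comp (measurable_id.pow_const m)).integral_eq
  simp only [hindep.integral_sum_range_succ_pow hmeas hX, hmoment]

end Independence

theorem iid_even_asymptotic_moments_general
    {Ω : Type*} [MeasureSpace Ω]
    (X : ℕ → Ω → ℝ)
    (hmeas : ∀ i, Measurable (X i))
    (hindep : iIndepFun X ℙ)
    (hident : ∀ i, IdentDistrib (X i) (X 0) ℙ ℙ)
    (hmoments : ∀ m : ℕ, Integrable (fun ω => |X 0 ω| ^ m) ℙ)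
    (hmean : ∫ ω, X 0 ω ∂ℙ = 0)
    (k : ℕ) (hkeven : Even k) :
    Tendsto
      (fun n : ℕ => (∫ ω, (∑ i ∈ Finset.range n, X i ω) ^ k ∂ℙ) / (n : ℝ) ^ (k / 2))
      atTop
      (𝓝 ((k.factorial : ℝ) / (2 ^ (k / 2) * (k / 2).factorial)
        * (∫ ω, (X 0 ω) ^ 2 ∂ℙ) ^ (k / 2))) := by
  have hX (i m : ℕ) : Integrable (fun ω => X i ω ^ m) ℙ := by
    refine ((hident i).comp (measurable_id.pow_const m)).integrable_iff.2 <|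
      (integrable_norm_iff ((hmeas 0).pow_const m).aestronglyMeasurable).1 ?_
    simpa [abs_pow] using hmoments m
  obtain ⟨p, rfl⟩ := hkeven.two_dvd
  simpa [Nat.mul_div_cancel_left, gaussianEvenMoment] using
    (hindep.isCenteredWalkMoments hmeas hident hX hmean).tendsto_two_mul p

/-- For i.i.d. centered real random variables with all moments finite, the normalized
even moments `n^{-k/2} E[(X_1+...+X_n)^k]` converge to `C_k σ^k` with
`C_k = k! / (2^{k/2} (k/2)!)`. -/
theorem iid_even_asymptotic_moments
    {Ω : Type*} [MeasureSpace Ω] [IsProbabilityMeasure (ℙ : Measure Ω)]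
    (X : ℕ → Ω → ℝ)
    (hmeas : ∀ i, Measurable (X i))
    (hindep : iIndepFun X ℙ)
    (hident : ∀ i, IdentDistrib (X i) (X 0) ℙ ℙ)
    (hmoments : ∀ m : ℕ, Integrable (fun ω => |X 0 ω| ^ m) ℙ)
    (hmean : ∫ ω, X 0 ω ∂ℙ = 0)
    (k : ℕ) (hk : 2 ≤ k) (hkeven : Even k) :
    Tendsto
      (fun n : ℕ => (∫ ω, (∑ i ∈ Finset.range n, X i ω) ^ k ∂ℙ) / (n : ℝ) ^ (k / 2))
      atTop
      (𝓝 ((k.factorial : ℝ) / (2 ^ (k / 2) * (k / 2).factorial)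
        * (∫ ω, (X 0 ω) ^ 2 ∂ℙ) ^ (k / 2))) :=
  iid_even_asymptotic_moments_general X hmeas hindep hident hmoments hmean k hkeven
end

section
/- Let φ_ω(n) (n ∈ ℕ, ω ∈ Ω) be a measurable family satisfying 0 < φ_ω(n) ≤ 1 and the submultiplicativity φ_ω(n+m) ≤ φ_ω(n) · φ_{θ^n ω}(m) for a measure-preserving ergodic system (Ω, F, P, θ). If lim_{n→∞} (φ_ω(n))^{1/n} = 1 almost surely, then φ_ω(n) = 1 for P-almost every ω and all n ≥ 1. -/
/-!
Fix `n ≥ 1`, `c < 1` and let `A = {ω | φ ω n ≤ c}`. Submultiplicativity along the orbit of `θ^[n]`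
gives `log φ_ω(nk) ≤ log c · #{j < k | θ^[nj] ω ∈ A}`, so `φ_ω(N)^{1/N} → 1` forces the frequency
of visits of this orbit to `A` to tend to `0` almost surely. As `θ^[n]` preserves `μ`, every such
frequency has integral `μ A`, and bounded convergence gives `μ A = 0`.
-/

open MeasureTheory Filter Topology Finset

theorem norm_birkhoffAverage_le {α E : Type*} [NormedAddCommGroup E] [NormedSpace ℝ E]
    (T : α → α) {g : α → E} {C : ℝ} (hgC : ∀ x, ‖g x‖ ≤ C) (k : ℕ) (x : α) :
    ‖birkhoffAverage ℝ T g k x‖ ≤ C := by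
  rcases Nat.eq_zero_or_pos k with rfl | hk
  · simpa using (norm_nonneg _).trans (hgC x)
  have hsum : ‖birkhoffSum T g k x‖ ≤ k * C := by
    simpa [birkhoffSum] using norm_sum_le_of_le (range k) fun j _ => hgC (T^[j] x)
  rw [birkhoffAverage, norm_smul, norm_inv, Real.norm_natCast, inv_mul_le_iff₀ (by positivity)]
  exact hsum

namespace MeasureTheory.MeasurePreserving

variable {α E : Type*} [MeasurableSpace α] {μ : Measure α} {T : α → α}
  [NormedAddCommGroup E] {g : α → E}

theorem integrable_birkhoffSum (hT : MeasurePreserving T μ μ) (hg : Integrable g μ) (k : ℕ) :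
    Integrable (birkhoffSum T g k) μ :=
  integrable_finsetSum _ fun j _ => (hT.iterate j).integrable_comp_of_integrable hg

variable [NormedSpace ℝ E]

theorem integral_birkhoffSum (hT : MeasurePreserving T μ μ) (hg : Integrable g μ) (k : ℕ) :
    ∫ x, birkhoffSum T g k x ∂μ = k • ∫ x, g x ∂μ := by
  have hcomp : ∀ j, ∫ x, g (T^[j] x) ∂μ = ∫ x, g x ∂μ := fun j => by
    rw [← integral_map (hT.iterate j).measurable.aemeasurable
      (by rw [(hT.iterate j).map_eq]; exact hg.aestronglyMeasurable), (hT.iterate j).map_eq]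
  simp only [birkhoffSum]
  rw [integral_finsetSum (f := fun j x => g (T^[j] x)) _ fun j _ =>
    (hT.iterate j).integrable_comp_of_integrable hg]
  simp [hcomp]

theorem integral_birkhoffAverage (hT : MeasurePreserving T μ μ) (hg : Integrable g μ) {k : ℕ}
    (hk : k ≠ 0) : ∫ x, birkhoffAverage ℝ T g k x ∂μ = ∫ x, g x ∂μ := by
  simp only [birkhoffAverage]
  rw [integral_smul, integral_birkhoffSum hT hg, ← Nat.cast_smul_eq_nsmul ℝ, smul_smul,
    inv_mul_cancel₀ (by exact_mod_cast hk), one_smul]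

theorem integral_eq_of_tendsto_birkhoffAverage [IsFiniteMeasure μ] (hT : MeasurePreserving T μ μ)
    (hg : AEStronglyMeasurable g μ) {C : ℝ} (hgC : ∀ x, ‖g x‖ ≤ C) {h : α → E}
    (hlim : ∀ᵐ x ∂μ, Tendsto (fun k => birkhoffAverage ℝ T g k x) atTop (𝓝 (h x))) :
    ∫ x, h x ∂μ = ∫ x, g x ∂μ := by
  have hint : Integrable g μ := .of_bound hg C (.of_forall hgC)
  have hconv : Tendsto (fun k => ∫ x, birkhoffAverage ℝ T g k x ∂μ) atTop (𝓝 (∫ x, h x ∂μ)) :=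
    tendsto_integral_of_dominated_convergence (fun _ => C)
      (fun k => ((hT.integrable_birkhoffSum hint k).smul ((k : ℝ)⁻¹)).aestronglyMeasurable)
      (integrable_const C) (fun k => .of_forall (norm_birkhoffAverage_le T hgC k)) hlim
  refine tendsto_nhds_unique hconv (tendsto_const_nhds.congr' ?_)
  filter_upwards [eventually_ne_atTop 0] with k hk
  exact (hT.integral_birkhoffAverage hint hk).symm

theorem measure_eq_zero_of_tendsto_birkhoffAverage_indicator [IsFiniteMeasure μ]
    (hT : MeasurePreserving T μ μ) {A : Set α} (hA : MeasurableSet A)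
    (hlim : ∀ᵐ x ∂μ,
      Tendsto (fun k => birkhoffAverage ℝ T (A.indicator (1 : α → ℝ)) k x) atTop (𝓝 0)) :
    μ A = 0 := by
  have hint := hT.integral_eq_of_tendsto_birkhoffAverage
    (aestronglyMeasurable_one.indicator hA) (C := 1)
    (fun x => (norm_indicator_le_norm_self _ x).trans_eq (by simp)) hlim
  rwa [integral_zero, integral_indicator_one hA, eq_comm, measureReal_eq_zero_iff] at hint

end MeasureTheory.MeasurePreserving

theorem tendsto_inv_mul_log_of_tendsto_rpow_inv {u : ℕ → ℝ} (hu : ∀ N, 0 < u N)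
    (hlim : Tendsto (fun N : ℕ => u N ^ (N : ℝ)⁻¹) atTop (𝓝 1)) :
    Tendsto (fun N : ℕ => (N : ℝ)⁻¹ * Real.log (u N)) atTop (𝓝 0) := by
  have := (Real.continuousAt_log one_ne_zero).tendsto.comp hlim
  simpa [Function.comp_def, Real.log_rpow (hu _)] using this

theorem tendsto_inv_mul_log_mul_of_tendsto_rpow_inv {u : ℕ → ℝ} (hu : ∀ N, 0 < u N)
    (hlim : Tendsto (fun N : ℕ => u N ^ (N : ℝ)⁻¹) atTop (𝓝 1)) {n : ℕ} (hn : n ≠ 0) :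
    Tendsto (fun k : ℕ => (k : ℝ)⁻¹ * Real.log (u (n * k))) atTop (𝓝 0) := by
  have hmul : Tendsto (n * ·) atTop atTop := tendsto_id.const_mul_atTop' (Nat.pos_of_ne_zero hn)
  have := ((tendsto_inv_mul_log_of_tendsto_rpow_inv hu hlim).comp hmul).const_mul (n : ℝ)
  rw [mul_zero] at this
  refine this.congr fun k => ?_
  simp only [Function.comp_apply, Nat.cast_mul, mul_inv, ← mul_assoc]
  rw [mul_inv_cancel₀ (by exact_mod_cast hn), one_mul]

section Submultiplicative

variable {α : Type*} {θ : α → α} {φ : α → ℕ → ℝ} {x : α} {n : ℕ}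

theorem log_le_birkhoffSum_log (hpos : ∀ m, 0 < φ x m ∧ φ x m ≤ 1)
    (horbit : ∀ i, 0 < φ (θ^[i] x) n)
    (hsub : ∀ m, φ x (m + n) ≤ φ x m * φ (θ^[m] x) n) (k : ℕ) :
    Real.log (φ x (n * k)) ≤ birkhoffSum θ^[n] (fun y => Real.log (φ y n)) k x := by
  induction k with
  | zero => simpa using Real.log_nonpos (hpos 0).1.le (hpos 0).2
  | succ k ih =>
    rw [birkhoffSum_succ, ← Function.iterate_mul, Nat.mul_succ]
    calc Real.log (φ x (n * k + n))
        ≤ Real.log (φ x (n * k) * φ (θ^[n * k] x) n) :=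
          Real.log_le_log (hpos _).1 (hsub _)
      _ = Real.log (φ x (n * k)) + Real.log (φ (θ^[n * k] x) n) :=
          Real.log_mul (hpos _).1.ne' (horbit _).ne'
      _ ≤ _ := by gcongr

theorem birkhoffSum_log_le_log_mul (horbit : ∀ i, 0 < φ (θ^[i] x) n ∧ φ (θ^[i] x) n ≤ 1)
    (c : ℝ) (k : ℕ) :
    birkhoffSum θ^[n] (fun y => Real.log (φ y n)) k x ≤
      Real.log c * birkhoffSum θ^[n] ({y | φ y n ≤ c}.indicator (1 : α → ℝ)) k x := by
  rw [birkhoffSum, birkhoffSum, Finset.mul_sum]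
  refine Finset.sum_le_sum fun j _ => ?_
  rw [← Function.iterate_mul]
  by_cases hmem : φ (θ^[n * j] x) n ≤ c
  · simpa [hmem] using Real.log_le_log (horbit _).1 hmem
  · simpa [hmem] using Real.log_nonpos (horbit _).1.le (horbit _).2

theorem tendsto_birkhoffAverage_indicator_of_submultiplicative
    (hpos : ∀ m, 0 < φ x m ∧ φ x m ≤ 1)
    (horbit : ∀ i, 0 < φ (θ^[i] x) n ∧ φ (θ^[i] x) n ≤ 1)
    (hsub : ∀ m, φ x (m + n) ≤ φ x m * φ (θ^[m] x) n)
    (hlim : Tendsto (fun N : ℕ => φ x N ^ (N : ℝ)⁻¹) atTop (𝓝 1)) (hn : n ≠ 0)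
    {c : ℝ} (hc₀ : 0 < c) (hc₁ : c < 1) :
    Tendsto (fun k => birkhoffAverage ℝ θ^[n] ({y | φ y n ≤ c}.indicator (1 : α → ℝ)) k x)
      atTop (𝓝 0) := by
  have hdecay := tendsto_inv_mul_log_mul_of_tendsto_rpow_inv (fun N => (hpos N).1) hlim hn
  refine tendsto_of_tendsto_of_tendsto_of_le_of_le tendsto_const_nhds
    (by simpa using hdecay.div_const (Real.log c)) (fun k => ?_) (fun k => ?_)
  · exact smul_nonneg (by positivity) (sum_nonneg fun j _ => Set.indicator_nonneg (by simp) _)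
  · have hS := (log_le_birkhoffSum_log hpos (fun i => (horbit i).1) hsub k).trans
      (birkhoffSum_log_le_log_mul horbit c k)
    have := mul_le_mul_of_nonneg_left hS (inv_nonneg.2 (Nat.cast_nonneg k) : (0 : ℝ) ≤ (k : ℝ)⁻¹)
    rw [le_div_iff_of_neg (Real.log_neg hc₀ hc₁), birkhoffAverage, smul_eq_mul]
    linarith

end Submultiplicative

/-- A measurable submultiplicative family `0 < φ_ω(n) ≤ 1` over an ergodic system with
`(φ_ω(n))^{1/n} → 1` a.s. must satisfy `φ_ω(n) = 1` a.s. for all `n ≥ 1`. -/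
theorem submultiplicative_degenerate
    {Ω : Type*} [MeasurableSpace Ω] {μ : Measure Ω} [IsProbabilityMeasure μ]
    (θ : Ω → Ω) (herg : Ergodic θ μ)
    (φ : Ω → ℕ → ℝ) (hmeas : ∀ n, Measurable fun ω => φ ω n)
    (hpos : ∀ᵐ ω ∂μ, ∀ n, 0 < φ ω n ∧ φ ω n ≤ 1)
    (hsub : ∀ᵐ ω ∂μ, ∀ n m : ℕ, φ ω (n + m) ≤ φ ω n * φ (θ^[n] ω) m)
    (hlim : ∀ᵐ ω ∂μ,
      Tendsto (fun n : ℕ => (φ ω n) ^ ((n : ℝ)⁻¹)) atTop (𝓝 (1 : ℝ))) :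
    ∀ᵐ ω ∂μ, ∀ n : ℕ, 1 ≤ n → φ ω n = 1 := by
  have hT := herg.toMeasurePreserving
  have horbit : ∀ᵐ ω ∂μ, ∀ i n, 0 < φ (θ^[i] ω) n ∧ φ (θ^[i] ω) n ≤ 1 :=
    ae_all_iff.2 fun i => (hT.iterate i).quasiMeasurePreserving.ae hpos
  have hlarge : ∀ n ≠ 0, ∀ c ∈ Set.Ioo (0 : ℝ) 1, ∀ᵐ ω ∂μ, c < φ ω n := by
    intro n hn c hc
    have hnull : μ {ω | φ ω n ≤ c} = 0 := by
      refine (hT.iterate n).measure_eq_zero_of_tendsto_birkhoffAverage_indicator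
        (measurableSet_le (hmeas n) measurable_const) ?_
      filter_upwards [hpos, horbit, hsub, hlim] with ω hω hωorbit hωsub hωlim
      exact tendsto_birkhoffAverage_indicator_of_submultiplicative hω (fun i => hωorbit i n)
        (fun m => hωsub m n) hωlim hn hc.1 hc.2
    exact (measure_eq_zero_iff_ae_notMem.1 hnull).mono fun ω h => not_le.1 h
  obtain ⟨c, -, hc, hc_lim⟩ := exists_seq_strictMono_tendsto' (zero_lt_one' ℝ)
  have hall : ∀ᵐ ω ∂μ, ∀ m k, c k < φ ω (m + 1) :=
    ae_all_iff.2 fun m => ae_all_iff.2 fun k => hlarge (m + 1) m.succ_ne_zero (c k) (hc k)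
  filter_upwards [hpos, hall] with ω hω hωc n hn
  obtain ⟨m, rfl⟩ := Nat.exists_eq_add_of_le' hn
  exact le_antisymm (hω _).2 (le_of_tendsto' hc_lim fun k => (hωc m k).le)
end
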